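/- arXiv:2411.13711 — 3 statements merged into one kernel-verified Lean document; each statement's English description precedes it below -/
import Mathlib

section
/- Let T_m = C_α·ln^{ν₁}(m+3)/(m+3)^{ν₂} with ν₁ ≥ 0, ν₂ ∈ (1/2, 1], and let α_t = C_α/(t+3)^ν with ν ∈ (2/3, 1) and 1/2 < ν₂ < ν/(2−ν). Let t_0 = 0 and t_{m+1} = min{k : ∑_{t=t_m}^{k−1} α_t ≥ T_m}. Then there exist a constant K and an integer m_0 such that for all m ≥ m_0 and all t ≥ t_m, α_t ≤ K·T_m². -/
/-!
Summing the defining inequality `T m ≤ ∑_{t_m ≤ τ < t_{m+1}} α τ` over the first `m` intervals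
gives `∑_{j<m} T j ≤ ∑_{τ<t_m} α τ`. The left side is at least `m T_m ≍ m^{1-ν₂}` and, by
comparison with `∫ x^{-ν}` (Bernoulli's inequality step by step), the right side is
`O(t_m^{1-ν})`. Hence `t_m^ν ≳ m^{(1-ν₂)ν/(1-ν)} ≥ m^{2ν₂}`, the last step being exactly
`ν₂ ≤ ν/(2-ν)`, and since `α` is decreasing, `α s ≤ α t_m ≲ T_m²` for `s ≥ t_m`.
-/

open Finset Real

lemma mul_rpow_sub_one_le_rpow_sub_rpow_sub_one {q y : ℝ} (hq0 : 0 ≤ q) (hq1 : q ≤ 1)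
    (hy : 1 ≤ y) : q * y ^ (q - 1) ≤ y ^ q - (y - 1) ^ q := by
  have hy0 : 0 < y := by linarith
  have hbern : (1 + -y⁻¹) ^ q ≤ 1 + q * -y⁻¹ :=
    rpow_one_add_le_one_add_mul_self (by linarith [inv_le_one_of_one_le₀ hy]) hq0 hq1
  calc q * y ^ (q - 1) = y ^ q - y ^ q * (1 + q * -y⁻¹) := by
        rw [rpow_sub_one hy0.ne']; ring
    _ ≤ y ^ q - y ^ q * (1 + -y⁻¹) ^ q := by gcongr
    _ = y ^ q - (y - 1) ^ q := by
        rw [← mul_rpow hy0.le (by linarith [inv_le_one_of_one_le₀ hy]), mul_add,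
          mul_neg, mul_inv_cancel₀ hy0.ne', mul_one, ← sub_eq_add_neg]

lemma sum_range_rpow_neg_le {p a : ℝ} (hp0 : 0 ≤ p) (hp1 : p < 1) (ha : 0 ≤ a) (n : ℕ) :
    ∑ τ ∈ range n, ((τ : ℝ) + a + 1) ^ (-p) ≤ ((n : ℝ) + a) ^ (1 - p) / (1 - p) := by
  set f : ℕ → ℝ := fun k => ((k : ℝ) + a) ^ (1 - p) / (1 - p)
  have hstep : ∀ τ : ℕ, ((τ : ℝ) + a + 1) ^ (-p) ≤ f (τ + 1) - f τ := fun τ => by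
    have h := mul_rpow_sub_one_le_rpow_sub_rpow_sub_one (q := 1 - p) (by linarith)
      (by linarith) (show 1 ≤ (τ : ℝ) + a + 1 by linarith [(Nat.cast_nonneg τ : (0 : ℝ) ≤ τ)])
    simp only [f, ← sub_div, Nat.cast_succ, le_div_iff₀ (sub_pos.2 hp1)]
    rw [show (1 : ℝ) - p - 1 = -p by ring, add_sub_cancel_right] at h
    rw [show (τ : ℝ) + 1 + a = τ + a + 1 by ring]
    linarith
  calc ∑ τ ∈ range n, ((τ : ℝ) + a + 1) ^ (-p) ≤ ∑ τ ∈ range n, (f (τ + 1) - f τ) :=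
        sum_le_sum fun τ _ => hstep τ
    _ = f n - f 0 := sum_range_sub f n
    _ ≤ f n := sub_le_self _ (div_nonneg (by positivity) (by linarith))

lemma monotone_of_pos_le_sum_Ico {T α : ℕ → ℝ} {t : ℕ → ℕ} (hT : ∀ m, 0 < T m)
    (h : ∀ m, T m ≤ ∑ τ ∈ Ico (t m) (t (m + 1)), α τ) : Monotone t := by
  refine monotone_nat_of_le_succ fun m => ?_
  by_contra! hlt
  have := h m
  rw [Ico_eq_empty_of_le hlt.le, sum_empty] at this
  exact (hT m).not_ge this

lemma sum_range_le_sum_Ico_of_le_sum_Ico {T α : ℕ → ℝ} {t : ℕ → ℕ} (ht : Monotone t)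
    (h : ∀ m, T m ≤ ∑ τ ∈ Ico (t m) (t (m + 1)), α τ) (m : ℕ) :
    ∑ j ∈ range m, T j ≤ ∑ τ ∈ Ico (t 0) (t m), α τ := by
  induction m with
  | zero => simp
  | succ m ih =>
    rw [sum_range_succ, ← sum_Ico_consecutive α (ht m.zero_le) (ht m.le_succ)]
    exact add_le_add ih (h m)

lemma mul_rpow_le_rpow_of_mul_rpow_le {c x u a b d e : ℝ} (hc : 0 < c) (hx : 1 ≤ x)
    (hu : 0 ≤ u) (hb : 0 < b) (hd : 0 ≤ d) (he : e * b ≤ a * d) (h : c * x ^ a ≤ u ^ b) :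
    c ^ (d / b) * x ^ e ≤ u ^ d := by
  have hx0 : 0 ≤ x := by linarith
  calc c ^ (d / b) * x ^ e ≤ c ^ (d / b) * x ^ (a * (d / b)) := by
        gcongr
        rwa [← mul_div_assoc, le_div_iff₀ hb]
    _ = (c * x ^ a) ^ (d / b) := by rw [mul_rpow hc.le (by positivity), rpow_mul hx0]
    _ ≤ (u ^ b) ^ (d / b) := by gcongr
    _ = u ^ d := by rw [← rpow_mul hu, mul_div_cancel₀ d hb.ne']

lemma anchor_growth {Cα ν ν₂ : ℝ} {α T : ℕ → ℝ} {t : ℕ → ℕ} (hCα : 0 < Cα) (hν0 : 0 ≤ ν)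
    (hν1 : ν < 1) (hν₂ : 0 ≤ ν₂) (hα : ∀ t : ℕ, α t = Cα / ((t : ℝ) + 3) ^ ν)
    (hT : ∀ m : ℕ, T m = Cα / ((m : ℝ) + 3) ^ ν₂) (ht : Monotone t)
    (htsum : ∀ m, T m ≤ ∑ τ ∈ Ico (t m) (t (m + 1)), α τ) {m : ℕ} (hm : 3 ≤ m) :
    (1 - ν) / 2 * ((m : ℝ) + 3) ^ (1 - ν₂) ≤ ((t m : ℝ) + 2) ^ (1 - ν) := by
  have hx : (0 : ℝ) < m + 3 := by positivity
  have hlower : Cα * (((m : ℝ) + 3) ^ (1 - ν₂) / 2) ≤ ∑ j ∈ range m, T j :=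
    calc Cα * (((m : ℝ) + 3) ^ (1 - ν₂) / 2) = ((m : ℝ) + 3) / 2 * T m := by
          rw [hT, rpow_sub hx, rpow_one]; ring
      _ ≤ m * T m := by
          gcongr
          · rw [hT]; positivity
          · linarith [show (3 : ℝ) ≤ m by exact_mod_cast hm]
      _ ≤ ∑ j ∈ range m, T j := by
          simpa using card_nsmul_le_sum (range m) T (T m) fun j hj => by
            rw [hT, hT]
            gcongr
            exact_mod_cast (mem_range.1 hj).le
  have hupper : ∑ j ∈ range m, T j ≤ Cα * (((t m : ℝ) + 2) ^ (1 - ν) / (1 - ν)) :=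
    calc ∑ j ∈ range m, T j ≤ ∑ τ ∈ Ico (t 0) (t m), α τ :=
          sum_range_le_sum_Ico_of_le_sum_Ico ht htsum m
      _ ≤ ∑ τ ∈ range (t m), α τ :=
          sum_le_sum_of_subset_of_nonneg (fun τ hτ => mem_range.2 (mem_Ico.1 hτ).2)
            fun τ _ _ => by rw [hα]; positivity
      _ = Cα * ∑ τ ∈ range (t m), ((τ : ℝ) + 2 + 1) ^ (-ν) := by
          rw [mul_sum]
          refine sum_congr rfl fun τ _ => ?_
          rw [hα, rpow_neg (by positivity), add_assoc]
          norm_num [div_eq_mul_inv]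
      _ ≤ Cα * (((t m : ℝ) + 2) ^ (1 - ν) / (1 - ν)) := by
          gcongr
          exact sum_range_rpow_neg_le hν0 hν1 zero_le_two _
  have h := le_of_mul_le_mul_left (hlower.trans hupper) hCα
  rw [div_le_div_iff₀ two_pos (sub_pos.2 hν1)] at h
  linarith

theorem lr_bound_on_intervals_general (Cα ν ν₂ : ℝ) (hCα : 0 < Cα)
    (hν : ν ∈ Set.Ioo (2/3 : ℝ) 1) (hν₂ : 1/2 < ν₂) (hν₂' : ν₂ < ν / (2 - ν))
    (α : ℕ → ℝ) (hα : ∀ t : ℕ, α t = Cα / ((t : ℝ) + 3) ^ ν)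
    (T : ℕ → ℝ) (hT : ∀ m : ℕ, T m = Cα / ((m : ℝ) + 3) ^ ν₂)
    (t : ℕ → ℕ)
    (htsum : ∀ m, T m ≤ ∑ τ ∈ Finset.Ico (t m) (t (m + 1)), α τ) :
    ∃ (K : ℝ) (m₀ : ℕ), ∀ m ≥ m₀, ∀ s ≥ t m, α s ≤ K * (T m) ^ 2 := by
  obtain ⟨hν0, hν1⟩ := hν
  have ht : Monotone t := monotone_of_pos_le_sum_Ico (fun m => by rw [hT]; positivity) htsum
  have hexp : 2 * ν₂ * (1 - ν) ≤ (1 - ν₂) * ν := by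
    have := (lt_div_iff₀ (by linarith : (0 : ℝ) < 2 - ν)).1 hν₂'
    linarith
  set c := ((1 - ν) / 2) ^ (ν / (1 - ν))
  have hc : 0 < c := by have := sub_pos.2 hν1; positivity
  refine ⟨1 / (Cα * c), 3, fun m hm s hs => ?_⟩
  have hgrowth := mul_rpow_le_rpow_of_mul_rpow_le (by linarith) (by linarith) (by positivity)
    (by linarith) (by linarith) hexp
    (anchor_growth hCα (by linarith) hν1 (by linarith) hα hT ht htsum hm)
  have hts : (t m : ℝ) + 2 ≤ s + 3 := by linarith [show (t m : ℝ) ≤ s by exact_mod_cast hs]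
  calc α s = Cα / ((s : ℝ) + 3) ^ ν := hα s
    _ ≤ Cα / ((t m : ℝ) + 2) ^ ν := by gcongr
    _ ≤ Cα / (c * ((m : ℝ) + 3) ^ (2 * ν₂)) := by gcongr
    _ = 1 / (Cα * c) * T m ^ 2 := by
        rw [hT, div_pow, ← rpow_mul_natCast (by positivity), Nat.cast_two, mul_comm ν₂]
        field_simp

theorem lr_bound_on_intervals (Cα ν ν₂ : ℝ) (hCα : 0 < Cα)
    (hν : ν ∈ Set.Ioo (2/3 : ℝ) 1) (hν₂ : 1/2 < ν₂) (hν₂' : ν₂ < ν / (2 - ν))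
    (α : ℕ → ℝ) (hα : ∀ t : ℕ, α t = Cα / ((t : ℝ) + 3) ^ ν)
    (T : ℕ → ℝ) (hT : ∀ m : ℕ, T m = Cα / ((m : ℝ) + 3) ^ ν₂)
    (t : ℕ → ℕ) (ht0 : t 0 = 0)
    (htsum : ∀ m, T m ≤ ∑ τ ∈ Finset.Ico (t m) (t (m + 1)), α τ)
    (htmin : ∀ m k, t m ≤ k → k < t (m + 1) → ∑ τ ∈ Finset.Ico (t m) k, α τ < T m) :
    ∃ (K : ℝ) (m₀ : ℕ), ∀ m ≥ m₀, ∀ s ≥ t m, α s ≤ K * (T m) ^ 2 :=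
  lr_bound_on_intervals_general Cα ν ν₂ hCα hν hν₂ hν₂' α hα T hT t htsum
end

section
/- Almost-supermartingale convergence rate: Let {A_t}, {B_t}, {Z_t}, {α_t} be sequences of non-negative random variables adapted to a filtration {F_t}, and let ε ∈ (0,1). Assume (i) E[Z_{t+1} | F_t] ≤ (1+A_t)Z_t + B_t − α_t Z_t for all t; (ii) ∑A_t < ∞, ∑B_t < ∞, ∑α_t = ∞ a.s.; (iii) there is T ≥ 1 with α_t ≥ ε/t a.s. for all t ≥ T; (iv) ∑_{t≥1}(t+1)^ε B_t < ∞ and ∑_{t≥1}(α_t − ε/t) = ∞ a.s. Then t^ε Z_t → 0 almost surely. -/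
open MeasureTheory Filter Finset Topology

/-!
Robbins–Siegmund argument. Dividing `Z t` by `∏ s < t, (1 + A s)` removes the growth
coefficients, after which `Y t + ∑ s < t, (D s - C s)` is a supermartingale. It need be neither
integrable nor bounded below, so it is frozen once the partial sums of `C` exceed a level `n`: the
frozen process is bounded below by `-n`, hence converges a.s., and on `{∑ C ≤ n}` it coincides with
the unfrozen one. This gives convergence of `Z` and summability of `D`; when `D = α Z` with
`∑ α = ∞`, the limit must be `0`.

For the rate, `t ^ ε Z t` is again an almost supermartingale, with decrease coefficient
`α t - ε / t`, because `(t + 1) ^ ε ≤ t ^ ε (1 + ε / t)`.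
-/

lemma tendsto_zero_of_summable_mul_of_tendsto_sum {z a : ℕ → ℝ} {L : ℝ}
    (hz : ∀ t, 0 ≤ z t) (ha : ∀ t, 0 ≤ a t) (hzL : Tendsto z atTop (𝓝 L))
    (hsum : Summable fun t => a t * z t)
    (hdiv : Tendsto (fun n => ∑ t ∈ range n, a t) atTop atTop) :
    Tendsto z atTop (𝓝 0) := by
  obtain rfl | hL := (ge_of_tendsto' hzL hz).eq_or_lt
  · exact hzL
  refine absurd ?_ ((not_summable_iff_tendsto_nat_atTop_of_nonneg ha).2 hdiv)
  refine (hsum.mul_left (2 / L)).of_norm_bounded_eventually_nat ?_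
  filter_upwards [hzL.eventually (eventually_ge_nhds (half_lt_self hL))] with t ht
  rw [Real.norm_of_nonneg (ha t)]
  calc a t = 2 / L * (a t * (L / 2)) := by field_simp
    _ ≤ 2 / L * (a t * z t) := by gcongr; exact ha t

lemma exists_tendsto_and_summable_of_tendsto_add_sum {y c d : ℕ → ℝ} {u : ℝ}
    (hy : ∀ t, 0 ≤ y t) (hc : ∀ t, 0 ≤ c t) (hd : ∀ t, 0 ≤ d t) (hcs : Summable c)
    (hu : Tendsto (fun t => y t + ∑ s ∈ range t, (d s - c s)) atTop (𝓝 u)) :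
    (∃ l, Tendsto y atTop (𝓝 l)) ∧ Summable d := by
  obtain ⟨M, hM⟩ := hu.bddAbove_range
  have hds : Summable d := by
    refine summable_of_sum_range_le hd (c := M + ∑' s, c s) fun t => ?_
    have hMt : y t + ∑ s ∈ range t, (d s - c s) ≤ M := hM ⟨t, rfl⟩
    have hct := hcs.sum_le_tsum (range t) fun s _ => hc s
    rw [sum_sub_distrib] at hMt
    linarith [hy t]
  refine ⟨⟨_, (hu.sub (hds.hasSum.sub hcs.hasSum).tendsto_sum_nat).congr fun t => ?_⟩, hds⟩
  exact add_sub_cancel_right _ _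

lemma add_one_rpow_le_rpow_mul {t ε : ℝ} (ht : 0 < t) (hε0 : 0 ≤ ε) (hε1 : ε ≤ 1) :
    (t + 1) ^ ε ≤ t ^ ε * (1 + ε / t) := by
  have hbern := rpow_one_add_le_one_add_mul_self (s := 1 / t) (by
    have : 0 ≤ 1 / t := by positivity
    linarith) hε0 hε1
  calc (t + 1) ^ ε = t ^ ε * (1 + 1 / t) ^ ε := by
        rw [← Real.mul_rpow ht.le (by positivity)]
        congr 1
        field_simp
    _ ≤ t ^ ε * (1 + ε / t) := by
        gcongr
        simpa [div_eq_mul_one_div ε t] using hbern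

lemma add_one_rpow_mul_step_le {ε t a b z α : ℝ} (hε0 : 0 ≤ ε) (hε1 : ε ≤ 1) (ht : 1 ≤ t)
    (ha : 0 ≤ a) (hz : 0 ≤ z) (hα : ε / t ≤ α) :
    (t + 1) ^ ε * ((1 + a) * z + b - α * z) ≤
      (1 + 2 * a) * (t ^ ε * z) + (t + 1) ^ ε * b - (α - ε / t) * (t ^ ε * z) := by
  have ht0 : 0 < t := by linarith
  have hεt0 : 0 ≤ ε / t := by positivity
  have hεt1 : ε / t ≤ 1 := div_le_one_of_le₀ (hε1.trans ht) ht0.le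
  have hmono : t ^ ε ≤ (t + 1) ^ ε := by gcongr; linarith
  have key : (t + 1) ^ ε * (1 + a - α) ≤ t ^ ε * (1 + 2 * a - α + ε / t) := by
    rcases le_or_gt 0 (1 + a - α) with hc | hc
    · calc (t + 1) ^ ε * (1 + a - α) ≤ t ^ ε * (1 + ε / t) * (1 + a - α) := by
            gcongr
            exact add_one_rpow_le_rpow_mul ht0 hε0 hε1
        _ ≤ t ^ ε * (1 + 2 * a - α + ε / t) := by
            rw [mul_assoc]
            gcongr
            nlinarith [mul_le_of_le_one_left ha hεt1, mul_nonneg hεt0 (hεt0.trans hα)]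
    · calc (t + 1) ^ ε * (1 + a - α) ≤ t ^ ε * (1 + a - α) :=
            mul_le_mul_of_nonpos_right hmono hc.le
        _ ≤ t ^ ε * (1 + 2 * a - α + ε / t) := by gcongr; linarith
  linear_combination mul_le_mul_of_nonneg_right key hz

section

variable {Ω : Type*}

section Localization

variable {Y C D : ℕ → Ω → ℝ} {n : ℝ} {ω : Ω}

/-- The process `Y t + ∑ s < t, (D s - C s)`, frozen from the first time `t` at which
`∑ r ≤ t, C r` exceeds `n`. -/
noncomputable def localizedProcess (Y C D : ℕ → Ω → ℝ) (n : ℝ) (t : ℕ) : Ω → ℝ :=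
  Y 0 + ∑ s ∈ range t,
    {ω | ∑ r ∈ range (s + 1), C r ω ≤ n}.indicator (Y (s + 1) - (Y s + C s - D s))

lemma localizedProcess_apply_of_sum_le (hC : ∀ t, 0 ≤ C t ω) {t : ℕ}
    (h : ∑ r ∈ range t, C r ω ≤ n) :
    localizedProcess Y C D n t ω = Y t ω + ∑ s ∈ range t, (D s ω - C s ω) := by
  have hmem : ∀ s ∈ range t, ω ∈ {ω | ∑ r ∈ range (s + 1), C r ω ≤ n} := fun s hs =>
    (sum_le_sum_of_subset_of_nonneg (range_subset_range.2 (mem_range.1 hs))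
      fun r _ _ => hC r).trans h
  simp only [localizedProcess, Pi.add_apply, Finset.sum_apply]
  rw [sum_congr rfl fun s hs => Set.indicator_of_mem (hmem s hs) _]
  have htel := sum_range_sub (fun s => Y s ω) t
  have hsplit : ∑ s ∈ range t, (Y (s + 1) - (Y s + C s - D s)) ω =
      ∑ s ∈ range t, (Y (s + 1) ω - Y s ω) + ∑ s ∈ range t, (D s ω - C s ω) := by
    rw [← sum_add_distrib]
    exact sum_congr rfl fun s _ => by simp only [Pi.sub_apply, Pi.add_apply]; ring
  rw [hsplit, htel]
  ring

lemma neg_le_localizedProcess (hn : 0 ≤ n) (hY : ∀ t, 0 ≤ Y t ω) (hC : ∀ t, 0 ≤ C t ω)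
    (hD : ∀ t, 0 ≤ D t ω) (t : ℕ) : -n ≤ localizedProcess Y C D n t ω := by
  induction t with
  | zero => simpa [localizedProcess] using (neg_nonpos.2 hn).trans (hY 0)
  | succ t ih =>
    by_cases h : ∑ r ∈ range (t + 1), C r ω ≤ n
    · rw [localizedProcess_apply_of_sum_le hC h, sum_sub_distrib]
      have := sum_nonneg fun s (_ : s ∈ range (t + 1)) => hD s
      linarith [hY (t + 1)]
    · have hstop : localizedProcess Y C D n (t + 1) ω = localizedProcess Y C D n t ω := by
        simp only [localizedProcess, Pi.add_apply, Finset.sum_apply]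
        rw [sum_range_succ, Set.indicator_of_notMem (s := {ω | ∑ r ∈ range (t + 1), C r ω ≤ n}) h,
          add_zero]
      exact hstop ▸ ih

end Localization

variable {mΩ : MeasurableSpace Ω}

section Supermartingale

variable {μ : Measure Ω} {ℱ : Filtration ℕ mΩ}

lemma condExp_indicator_sub_nonpos {m : MeasurableSpace Ω} (hm : m ≤ mΩ)
    [SigmaFinite (μ.trim hm)] {s : Set Ω} (hs : MeasurableSet[m] s) {f g : Ω → ℝ}
    (hf : Integrable f μ) (hg : StronglyMeasurable[m] g) (hgi : Integrable (s.indicator g) μ)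
    (hfg : μ[f | m] ≤ᵐ[μ] g) : μ[s.indicator (f - g) | m] ≤ᵐ[μ] 0 := by
  rw [Set.indicator_sub']
  filter_upwards [condExp_sub (hf.indicator (hm s hs)) hgi m, condExp_indicator hf hs, hfg]
    with ω hsub hind hω
  rw [hsub, Pi.sub_apply, hind, condExp_of_stronglyMeasurable hm (hg.indicator hs) hgi]
  by_cases hωs : ω ∈ s <;> simp [hωs, hω]

lemma supermartingale_add_sum [IsFiniteMeasure μ] {X : Ω → ℝ} {ξ : ℕ → Ω → ℝ}
    (hX : StronglyMeasurable[ℱ 0] X) (hXi : Integrable X μ)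
    (hξ : ∀ t, StronglyMeasurable[ℱ (t + 1)] (ξ t)) (hξi : ∀ t, Integrable (ξ t) μ)
    (hξc : ∀ t, μ[ξ t | ℱ t] ≤ᵐ[μ] 0) :
    Supermartingale (fun t => X + ∑ s ∈ range t, ξ s) ℱ μ := by
  refine supermartingale_of_condExp_sub_nonneg_nat (fun t => ?_) (fun t => ?_) fun t => ?_
  · exact (hX.mono (ℱ.mono (Nat.zero_le t))).add
      (Finset.stronglyMeasurable_sum _ fun s hs => (hξ s).mono (ℱ.mono (mem_range.1 hs)))
  · exact hXi.add (integrable_finsetSum' _ fun s _ => hξi s)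
  · have hdiff : (X + ∑ s ∈ range t, ξ s) - (X + ∑ s ∈ range (t + 1), ξ s) = -ξ t := by
      rw [sum_range_succ]; abel
    rw [hdiff]
    filter_upwards [condExp_neg (ξ t) (ℱ t), hξc t] with ω hneg hω
    simpa [hneg] using hω

theorem MeasureTheory.Supermartingale.exists_ae_tendsto_of_ae_ge [IsFiniteMeasure μ] {f : ℕ → Ω → ℝ}
    (hf : Supermartingale f ℱ μ) {R : ℝ} (hR : ∀ t, ∀ᵐ ω ∂μ, -R ≤ f t ω) :
    ∀ᵐ ω ∂μ, ∃ c, Tendsto (fun t => f t ω) atTop (𝓝 c) := by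
  have hbdd : ∀ t, eLpNorm ((-f) t) 1 μ ≤
      ENNReal.ofReal (∫ ω, f 0 ω ∂μ + 2 * |R| * μ.real Set.univ) := by
    intro t
    rw [Pi.neg_apply, eLpNorm_neg, eLpNorm_one_eq_lintegral_enorm,
      ← ofReal_integral_norm_eq_lintegral_enorm (hf.integrable t)]
    refine ENNReal.ofReal_le_ofReal ?_
    have hnorm : ∀ᵐ ω ∂μ, ‖f t ω‖ ≤ f t ω + 2 * |R| := by
      filter_upwards [hR t] with ω hω
      rw [Real.norm_eq_abs, abs_le]
      constructor <;> linarith [le_abs_self R, abs_nonneg R]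
    calc ∫ ω, ‖f t ω‖ ∂μ ≤ ∫ ω, (f t ω + 2 * |R|) ∂μ :=
          integral_mono_ae (hf.integrable t).norm ((hf.integrable t).add (integrable_const _)) hnorm
      _ = ∫ ω, f t ω ∂μ + 2 * |R| * μ.real Set.univ := by
          rw [integral_add (hf.integrable t) (integrable_const _), integral_const, smul_eq_mul,
            mul_comm]
      _ ≤ ∫ ω, f 0 ω ∂μ + 2 * |R| * μ.real Set.univ := by
          simpa using hf.setIntegral_le (Nat.zero_le t) MeasurableSet.univ
  filter_upwards [hf.neg.exists_ae_tendsto_of_bdd hbdd] with ω ⟨c, hc⟩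
  exact ⟨-c, by simpa using hc.neg⟩

end Supermartingale

/-- Almost supermartingale in the sense of Robbins–Siegmund, with growth `A`, noise `B` and
decrease `D`. -/
structure IsAlmostSupermartingale (μ : Measure Ω) (ℱ : Filtration ℕ mΩ)
    (A B Z D : ℕ → Ω → ℝ) : Prop where
  adapted_A : Adapted ℱ A
  adapted_B : Adapted ℱ B
  adapted_Z : Adapted ℱ Z
  adapted_D : Adapted ℱ D
  nonneg_A : ∀ t, 0 ≤ᵐ[μ] A t
  nonneg_B : ∀ t, 0 ≤ᵐ[μ] B t
  nonneg_Z : ∀ t, 0 ≤ᵐ[μ] Z t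
  nonneg_D : ∀ t, 0 ≤ᵐ[μ] D t
  integrable : ∀ t, Integrable (Z t) μ
  condExp_le : ∀ t, μ[Z (t + 1) | ℱ t] ≤ᵐ[μ] fun ω => (1 + A t ω) * Z t ω + B t ω - D t ω

noncomputable def prodOneAdd (A : ℕ → Ω → ℝ) (t : ℕ) (ω : Ω) : ℝ := ∏ s ∈ range t, (1 + A s ω)

lemma measurable_prodOneAdd {ℱ : Filtration ℕ mΩ} {A : ℕ → Ω → ℝ} (hA : Adapted ℱ A)
    {t u : ℕ} (hu : u ≤ t + 1) : Measurable[ℱ t] (prodOneAdd A u) :=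
  Finset.measurable_prod _ fun s hs =>
    measurable_const.add ((hA s).mono (ℱ.mono (by have := mem_range.1 hs; omega)) le_rfl)

lemma one_le_prodOneAdd {A : ℕ → Ω → ℝ} {ω : Ω} (hA : ∀ s, 0 ≤ A s ω) (t : ℕ) :
    1 ≤ prodOneAdd A t ω :=
  one_le_prod fun s _ => le_add_of_nonneg_right (hA s)

namespace IsAlmostSupermartingale

variable {μ : Measure Ω} {ℱ : Filtration ℕ mΩ} {A B Z D : ℕ → Ω → ℝ}

lemma ae_nonneg (h : IsAlmostSupermartingale μ ℱ A B Z D) :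
    ∀ᵐ ω ∂μ, ∀ t, 0 ≤ A t ω ∧ 0 ≤ B t ω ∧ 0 ≤ Z t ω ∧ 0 ≤ D t ω := by
  rw [ae_all_iff]
  intro t
  filter_upwards [h.nonneg_A t, h.nonneg_B t, h.nonneg_Z t, h.nonneg_D t] with ω hA hB hZ hD
  exact ⟨hA, hB, hZ, hD⟩

lemma le_one_add_mul_add (h : IsAlmostSupermartingale μ ℱ A B Z D) (t : ℕ) :
    D t ≤ᵐ[μ] fun ω => (1 + A t ω) * Z t ω + B t ω := by
  filter_upwards [condExp_nonneg (m := ℱ t) (h.nonneg_Z (t + 1)), h.condExp_le t] with ω h0 hle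
  rw [Pi.zero_apply] at h0
  linarith

lemma supermartingale_localizedProcess [IsFiniteMeasure μ] {Y C : ℕ → Ω → ℝ}
    (h : IsAlmostSupermartingale μ ℱ 0 C Y D) (n : ℝ) :
    Supermartingale (localizedProcess Y C D n) ℱ μ := by
  set E : ℕ → Set Ω := fun s => {ω | ∑ r ∈ range (s + 1), C r ω ≤ n}
  have hE : ∀ s, MeasurableSet[ℱ s] (E s) := fun s =>
    measurableSet_le (Finset.measurable_sum _ fun r hr =>
      (h.adapted_B r).mono (ℱ.mono (Nat.lt_succ_iff.1 (mem_range.1 hr))) le_rfl) measurable_const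
  have hg : ∀ s, Measurable[ℱ s] (Y s + C s - D s) := fun s =>
    ((h.adapted_Z s).add (h.adapted_B s)).sub (h.adapted_D s)
  have hgi : ∀ s, Integrable ((E s).indicator (Y s + C s - D s)) μ := by
    intro s
    refine ((h.integrable s).add (integrable_const |n|)).mono'
      ((((hg s).indicator (hE s)).mono (ℱ.le s) le_rfl).aestronglyMeasurable) ?_
    filter_upwards [h.ae_nonneg, h.le_one_add_mul_add s] with ω h0 hD
    by_cases hω : ω ∈ E s
    · have hCs : C s ω ≤ n :=
        (single_le_sum (fun r _ => (h0 r).2.1) (self_mem_range_succ s)).trans hω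
      simp only [Pi.zero_apply, add_zero, one_mul] at hD
      rw [Set.indicator_of_mem hω, Real.norm_eq_abs, abs_le]
      simp only [Pi.add_apply, Pi.sub_apply]
      constructor <;> linarith [(h0 s).2.2.2, (h0 s).2.2.1, le_abs_self n]
    · simp only [Set.indicator_of_notMem hω, norm_zero, Pi.add_apply]
      linarith [(h0 s).2.2.1, abs_nonneg n]
  refine supermartingale_add_sum ((h.adapted_Z 0).stronglyMeasurable) (h.integrable 0)
    (fun s => ?_) (fun s => ?_) fun s => ?_
  · exact (((h.adapted_Z (s + 1)).sub ((hg s).mono (ℱ.mono s.le_succ) le_rfl)).indicator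
      (ℱ.mono s.le_succ _ (hE s))).stronglyMeasurable
  · rw [Set.indicator_sub']
    exact ((h.integrable (s + 1)).indicator (ℱ.le s _ (hE s))).sub (hgi s)
  · refine condExp_indicator_sub_nonpos (ℱ.le s) (hE s) (h.integrable (s + 1))
      (hg s).stronglyMeasurable (hgi s) ?_
    filter_upwards [h.condExp_le s] with ω hω
    simpa using hω

theorem robbinsSiegmund_of_zero_growth [IsFiniteMeasure μ] {Y C : ℕ → Ω → ℝ}
    (h : IsAlmostSupermartingale μ ℱ 0 C Y D) (hC : ∀ᵐ ω ∂μ, Summable fun t => C t ω) :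
    ∀ᵐ ω ∂μ, (∃ l, Tendsto (fun t => Y t ω) atTop (𝓝 l)) ∧ Summable fun t => D t ω := by
  have hconv : ∀ n : ℕ, ∀ᵐ ω ∂μ, ∃ c, Tendsto (fun t => localizedProcess Y C D n t ω) atTop (𝓝 c) :=
    fun n => (h.supermartingale_localizedProcess n).exists_ae_tendsto_of_ae_ge fun t => by
      filter_upwards [h.ae_nonneg] with ω h0
      exact neg_le_localizedProcess n.cast_nonneg (fun t => (h0 t).2.2.1) (fun t => (h0 t).2.1)
        (fun t => (h0 t).2.2.2) t
  filter_upwards [ae_all_iff.2 hconv, hC, h.ae_nonneg] with ω hconv hC h0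
  obtain ⟨n, hn⟩ := exists_nat_ge (∑' t, C t ω)
  obtain ⟨u, hu⟩ := hconv n
  refine exists_tendsto_and_summable_of_tendsto_add_sum (fun t => (h0 t).2.2.1)
    (fun t => (h0 t).2.1) (fun t => (h0 t).2.2.2) hC (hu.congr fun t => ?_)
  exact localizedProcess_apply_of_sum_le (fun t => (h0 t).2.1)
    ((hC.sum_le_tsum _ fun r _ => (h0 r).2.1).trans hn)

theorem div_prodOneAdd (h : IsAlmostSupermartingale μ ℱ A B Z D) :
    IsAlmostSupermartingale μ ℱ 0 (fun t ω => B t ω / prodOneAdd A (t + 1) ω)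
      (fun t ω => Z t ω / prodOneAdd A t ω) (fun t ω => D t ω / prodOneAdd A (t + 1) ω) := by
  have hP : ∀ t, Measurable[ℱ t] (prodOneAdd A t) := fun t =>
    measurable_prodOneAdd h.adapted_A t.le_succ
  have hP' : ∀ t, Measurable[ℱ t] (prodOneAdd A (t + 1)) := fun t =>
    measurable_prodOneAdd h.adapted_A le_rfl
  have hP1 : ∀ᵐ ω ∂μ, ∀ t, 1 ≤ prodOneAdd A t ω := by
    filter_upwards [h.ae_nonneg] with ω h0 using one_le_prodOneAdd fun s => (h0 s).1
  have hP0 : ∀ᵐ ω ∂μ, ∀ t, 0 ≤ prodOneAdd A t ω := by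
    filter_upwards [hP1] with ω hω t using zero_le_one.trans (hω t)
  have hint : ∀ t, Integrable (fun ω => Z t ω / prodOneAdd A t ω) μ := by
    intro t
    refine (h.integrable t).norm.mono'
      (((h.adapted_Z t).div (hP t)).mono (ℱ.le t) le_rfl).aestronglyMeasurable ?_
    filter_upwards [hP1, hP0] with ω hω hω0
    rw [norm_div, Real.norm_of_nonneg (hω0 t)]
    exact div_le_self (norm_nonneg _) (hω t)
  refine ⟨fun _ => measurable_const, fun t => (h.adapted_B t).div (hP' t),
    fun t => (h.adapted_Z t).div (hP t), fun t => (h.adapted_D t).div (hP' t),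
    fun _ => ae_of_all _ fun _ => le_rfl, fun t => ?_, fun t => ?_, fun t => ?_, hint, fun t => ?_⟩
  · filter_upwards [h.nonneg_B t, hP0] with ω hB hω using div_nonneg hB (hω _)
  · filter_upwards [h.nonneg_Z t, hP0] with ω hZ hω using div_nonneg hZ (hω _)
  · filter_upwards [h.nonneg_D t, hP0] with ω hD hω using div_nonneg hD (hω _)
  have hfun : (fun ω => Z (t + 1) ω / prodOneAdd A (t + 1) ω) =
      (prodOneAdd A (t + 1))⁻¹ * Z (t + 1) := by
    funext ω
    simp [div_eq_inv_mul]
  have hpull := condExp_mul_of_stronglyMeasurable_left (hP' t).inv.stronglyMeasurable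
    (hfun ▸ hint (t + 1)) (h.integrable (t + 1))
  rw [hfun]
  filter_upwards [hpull, h.condExp_le t, h.ae_nonneg, hP1] with ω hpull hle h0 hω
  have hPt : prodOneAdd A (t + 1) ω = prodOneAdd A t ω * (1 + A t ω) := prod_range_succ _ _
  have hPt0 : 0 < prodOneAdd A t ω := zero_lt_one.trans_le (hω t)
  have hA0 : 0 < 1 + A t ω := by linarith [(h0 t).1]
  simp only [hpull, Pi.mul_apply, Pi.inv_apply, Pi.zero_apply, add_zero, one_mul]
  calc (prodOneAdd A (t + 1) ω)⁻¹ * μ[Z (t + 1) | ℱ t] ω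
      ≤ (prodOneAdd A (t + 1) ω)⁻¹ * ((1 + A t ω) * Z t ω + B t ω - D t ω) := by
        gcongr
        rw [hPt]
        positivity
    _ = _ := by rw [hPt]; field_simp

theorem robbinsSiegmund [IsFiniteMeasure μ] (h : IsAlmostSupermartingale μ ℱ A B Z D)
    (hA : ∀ᵐ ω ∂μ, Summable fun t => A t ω) (hB : ∀ᵐ ω ∂μ, Summable fun t => B t ω) :
    ∀ᵐ ω ∂μ, (∃ l, Tendsto (fun t => Z t ω) atTop (𝓝 l)) ∧ Summable fun t => D t ω := by
  have hB' : ∀ᵐ ω ∂μ, Summable fun t => B t ω / prodOneAdd A (t + 1) ω := by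
    filter_upwards [hB, h.ae_nonneg] with ω hB h0
    have hP := one_le_prodOneAdd fun s => (h0 s).1
    exact hB.of_nonneg_of_le (fun t => div_nonneg (h0 t).2.1 (zero_le_one.trans (hP _)))
      fun t => div_le_self (h0 t).2.1 (hP _)
  filter_upwards [h.div_prodOneAdd.robbinsSiegmund_of_zero_growth hB', hA, h.ae_nonneg]
    with ω ⟨⟨l, hl⟩, hD⟩ hA h0
  have hP1 := one_le_prodOneAdd fun s => (h0 s).1
  have hPne : ∀ t, prodOneAdd A t ω ≠ 0 := fun t => (zero_lt_one.trans_le (hP1 t)).ne'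
  have hP : Tendsto (fun t => prodOneAdd A t ω) atTop (𝓝 (∏' t, (1 + A t ω))) :=
    (Real.multipliable_one_add_of_summable hA).tendsto_prod_tprod_nat
  obtain ⟨K, hK⟩ := hP.bddAbove_range
  refine ⟨⟨_, (hP.mul hl).congr fun t => mul_div_cancel₀ _ (hPne t)⟩, ?_⟩
  refine (hD.mul_left K).of_nonneg_of_le (fun t => (h0 t).2.2.2) fun t => ?_
  calc D t ω = prodOneAdd A (t + 1) ω * (D t ω / prodOneAdd A (t + 1) ω) :=
        (mul_div_cancel₀ _ (hPne _)).symm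
    _ ≤ K * (D t ω / prodOneAdd A (t + 1) ω) := by
        gcongr
        · exact div_nonneg (h0 t).2.2.2 (zero_le_one.trans (hP1 _))
        · exact hK ⟨t + 1, rfl⟩

theorem ae_tendsto_zero [IsFiniteMeasure μ] {α : ℕ → Ω → ℝ}
    (h : IsAlmostSupermartingale μ ℱ A B Z fun t ω => α t ω * Z t ω) (hα : ∀ t, 0 ≤ᵐ[μ] α t)
    (hA : ∀ᵐ ω ∂μ, Summable fun t => A t ω) (hB : ∀ᵐ ω ∂μ, Summable fun t => B t ω)
    (hdiv : ∀ᵐ ω ∂μ, Tendsto (fun n => ∑ t ∈ range n, α t ω) atTop atTop) :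
    ∀ᵐ ω ∂μ, Tendsto (fun t => Z t ω) atTop (𝓝 0) := by
  filter_upwards [h.robbinsSiegmund hA hB, hdiv, ae_all_iff.2 hα, h.ae_nonneg]
    with ω ⟨⟨l, hl⟩, hsum⟩ hdiv hα h0
  exact tendsto_zero_of_summable_mul_of_tendsto_sum (fun t => (h0 t).2.2.1) hα hl hsum hdiv

end IsAlmostSupermartingale

/-- Noise coefficient of `t ^ ε Z t`. Before `T` no lower bound on `α` is available, so the whole
one-step bound is put into the noise. -/
noncomputable def weightedB (ε : ℝ) (T : ℕ) (A B Z : ℕ → Ω → ℝ) (t : ℕ) (ω : Ω) : ℝ :=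
  ((t : ℝ) + 1) ^ ε * (B t ω + if t < T then (1 + A t ω) * Z t ω else 0)

noncomputable def weightedα (ε : ℝ) (T : ℕ) (α : ℕ → Ω → ℝ) (t : ℕ) (ω : Ω) : ℝ :=
  if t < T then 0 else α t ω - ε / t

lemma summable_weightedB {ε : ℝ} {T : ℕ} {A B Z : ℕ → Ω → ℝ} {ω : Ω}
    (h : Summable fun t : ℕ => ((t : ℝ) + 1) ^ ε * B t ω) :
    Summable fun t => weightedB ε T A B Z t ω := by
  refine (summable_nat_add_iff T).1 (((summable_nat_add_iff T).2 h).congr fun t => ?_)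
  simp [weightedB]

lemma weightedα_nonneg {ε : ℝ} {T : ℕ} {α : ℕ → Ω → ℝ} {ω : Ω}
    (hα : ∀ t ≥ T, ε / t ≤ α t ω) (t : ℕ) : 0 ≤ weightedα ε T α t ω := by
  unfold weightedα
  split_ifs with ht
  · exact le_rfl
  · exact sub_nonneg.2 (hα t (not_lt.1 ht))

lemma tendsto_sum_weightedα {ε : ℝ} {T : ℕ} {α : ℕ → Ω → ℝ} {ω : Ω} (hT : 1 ≤ T)
    (h : Tendsto (fun n => ∑ t ∈ Ico 1 n, (α t ω - ε / t)) atTop atTop) :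
    Tendsto (fun n => ∑ t ∈ range n, weightedα ε T α t ω) atTop atTop := by
  refine (tendsto_atTop_add_const_right _ (-∑ t ∈ Ico 1 T, (α t ω - ε / t)) h).congr' ?_
  filter_upwards [eventually_ge_atTop T] with n hn
  have hbefore : ∑ t ∈ Ico 0 T, weightedα ε T α t ω = 0 :=
    sum_eq_zero fun t ht => by simp [weightedα, (mem_Ico.1 ht).2]
  have hafter : ∑ t ∈ Ico T n, weightedα ε T α t ω = ∑ t ∈ Ico T n, (α t ω - ε / t) :=
    sum_congr rfl fun t ht => by simp [weightedα, not_lt.2 (mem_Ico.1 ht).1]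
  rw [range_eq_Ico, ← sum_Ico_consecutive _ (Nat.zero_le T) hn, hbefore, hafter,
    ← sum_Ico_consecutive _ hT hn]
  ring

namespace IsAlmostSupermartingale

variable {μ : Measure Ω} {ℱ : Filtration ℕ mΩ} {A B Z α : ℕ → Ω → ℝ}

theorem rpow_mul (h : IsAlmostSupermartingale μ ℱ A B Z fun t ω => α t ω * Z t ω)
    (hα : Adapted ℱ α) {ε : ℝ} (hε0 : 0 ≤ ε) (hε1 : ε ≤ 1) {T : ℕ} (hT : 1 ≤ T)
    (hαT : ∀ᵐ ω ∂μ, ∀ t ≥ T, ε / t ≤ α t ω) :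
    IsAlmostSupermartingale μ ℱ (fun t ω => 2 * A t ω) (weightedB ε T A B Z)
      (fun t ω => (t : ℝ) ^ ε * Z t ω) fun t ω => weightedα ε T α t ω * ((t : ℝ) ^ ε * Z t ω) := by
  have hαm : ∀ t, Measurable[ℱ t] (weightedα ε T α t) := fun t => by
    change Measurable[ℱ t] fun ω => weightedα ε T α t ω
    by_cases htT : t < T
    · simp [weightedα, htT]
    · simpa [weightedα, htT] using (hα t).sub_const (ε / t)
  refine ⟨fun t => (h.adapted_A t).const_mul 2, fun t => ?_, fun t => (h.adapted_Z t).const_mul _,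
    fun t => (hαm t).mul ((h.adapted_Z t).const_mul _), fun t => ?_, fun t => ?_, fun t => ?_,
    fun t => ?_, fun t => (h.integrable t).const_mul _, fun t => ?_⟩
  · change Measurable[ℱ t] fun ω => weightedB ε T A B Z t ω
    by_cases htT : t < T
    · simpa [weightedB, htT] using
        ((h.adapted_B t).add (((h.adapted_A t).const_add 1).mul (h.adapted_Z t))).const_mul _
    · simpa [weightedB, htT] using (h.adapted_B t).const_mul _
  · filter_upwards [h.nonneg_A t] with ω hω
    simp only [Pi.zero_apply] at hω ⊢
    positivity
  · filter_upwards [h.ae_nonneg] with ω h0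
    obtain ⟨hA0, hB0, hZ0, -⟩ := h0 t
    unfold weightedB
    split_ifs <;> positivity
  · filter_upwards [h.nonneg_Z t] with ω hω
    simp only [Pi.zero_apply] at hω ⊢
    positivity
  · filter_upwards [hαT, h.nonneg_Z t] with ω hαT hZ
    exact mul_nonneg (weightedα_nonneg hαT t) (mul_nonneg (by positivity) hZ)
  · have hsmul : (fun ω => ((t + 1 : ℕ) : ℝ) ^ ε * Z (t + 1) ω) =
        ((t : ℝ) + 1) ^ ε • Z (t + 1) := by
      funext ω
      simp
    change μ[fun ω => ((t + 1 : ℕ) : ℝ) ^ ε * Z (t + 1) ω | ℱ t] ≤ᵐ[μ] _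
    rw [hsmul]
    filter_upwards [condExp_smul (((t : ℝ) + 1) ^ ε) (Z (t + 1)) (ℱ t), h.condExp_le t,
      h.ae_nonneg, hαT] with ω hsm hle h0 hαT
    obtain ⟨hA0, -, hZ0, hD0⟩ := h0 t
    rw [hsm, Pi.smul_apply, smul_eq_mul]
    refine (mul_le_mul_of_nonneg_left hle (by positivity)).trans ?_
    unfold weightedB weightedα
    split_ifs with htT
    · have : 0 ≤ (1 + 2 * A t ω) * ((t : ℝ) ^ ε * Z t ω) := by positivity
      nlinarith [mul_nonneg (by positivity : (0 : ℝ) ≤ ((t : ℝ) + 1) ^ ε) hD0]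
    · have ht : (1 : ℝ) ≤ t := by exact_mod_cast hT.trans (not_lt.1 htT)
      have := add_one_rpow_mul_step_le (b := B t ω) hε0 hε1 ht hA0 hZ0 (hαT t (not_lt.1 htT))
      linarith

end IsAlmostSupermartingale

end

theorem almost_supermartingale_rate_general
    {Ω : Type*} {mΩ : MeasurableSpace Ω} (μ : Measure Ω) [IsProbabilityMeasure μ]
    (ℱ : Filtration ℕ mΩ)
    (A B Z α : ℕ → Ω → ℝ) (ε : ℝ) (hε : ε ∈ Set.Ioo (0:ℝ) 1)
    (hA : Adapted ℱ A) (hB : Adapted ℱ B) (hZ : Adapted ℱ Z) (hα : Adapted ℱ α)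
    (hA0 : ∀ t, 0 ≤ᵐ[μ] A t) (hB0 : ∀ t, 0 ≤ᵐ[μ] B t)
    (hZ0 : ∀ t, 0 ≤ᵐ[μ] Z t) (hα0 : ∀ t, 0 ≤ᵐ[μ] α t)
    (hZint : ∀ t, Integrable (Z t) μ)
    (hrec : ∀ t, μ[Z (t + 1) | ℱ t] ≤ᵐ[μ]
      fun ω => (1 + A t ω) * Z t ω + B t ω - α t ω * Z t ω)
    (hAsum : ∀ᵐ ω ∂μ, Summable (fun t => A t ω))
    (hαlb : ∃ T : ℕ, 1 ≤ T ∧ ∀ᵐ ω ∂μ, ∀ t ≥ T, ε / (t : ℝ) ≤ α t ω)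
    (hBsum' : ∀ᵐ ω ∂μ, Summable (fun t : ℕ => ((t : ℝ) + 1) ^ ε * B t ω))
    (hαdiv' : ∀ᵐ ω ∂μ,
      Tendsto (fun n => ∑ t ∈ Finset.Ico 1 n, (α t ω - ε / (t : ℝ))) atTop atTop) :
    ∀ᵐ ω ∂μ, Tendsto (fun t : ℕ => (t : ℝ) ^ ε * Z t ω) atTop (nhds 0) := by
  obtain ⟨T, hT, hαT⟩ := hαlb
  have hZα : IsAlmostSupermartingale μ ℱ A B Z fun t ω => α t ω * Z t ω :=
    ⟨hA, hB, hZ, fun t => (hα t).mul (hZ t), hA0, hB0, hZ0,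
      fun t => by filter_upwards [hα0 t, hZ0 t] with ω hαω hZω using mul_nonneg hαω hZω,
      hZint, hrec⟩
  refine (hZα.rpow_mul hα hε.1.le hε.2.le hT hαT).ae_tendsto_zero
    (fun t => by filter_upwards [hαT] with ω hω using weightedα_nonneg hω t) ?_ ?_ ?_
  · filter_upwards [hAsum] with ω h using h.mul_left 2
  · filter_upwards [hBsum'] with ω h using summable_weightedB h
  · filter_upwards [hαdiv'] with ω h using tendsto_sum_weightedα hT h

theorem almost_supermartingale_rate
    {Ω : Type*} {mΩ : MeasurableSpace Ω} (μ : Measure Ω) [IsProbabilityMeasure μ]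
    (ℱ : Filtration ℕ mΩ)
    (A B Z α : ℕ → Ω → ℝ) (ε : ℝ) (hε : ε ∈ Set.Ioo (0:ℝ) 1)
    (hA : Adapted ℱ A) (hB : Adapted ℱ B) (hZ : Adapted ℱ Z) (hα : Adapted ℱ α)
    (hA0 : ∀ t, 0 ≤ᵐ[μ] A t) (hB0 : ∀ t, 0 ≤ᵐ[μ] B t)
    (hZ0 : ∀ t, 0 ≤ᵐ[μ] Z t) (hα0 : ∀ t, 0 ≤ᵐ[μ] α t)
    (hZint : ∀ t, Integrable (Z t) μ)
    (hrec : ∀ t, μ[Z (t + 1) | ℱ t] ≤ᵐ[μ]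
      fun ω => (1 + A t ω) * Z t ω + B t ω - α t ω * Z t ω)
    (hAsum : ∀ᵐ ω ∂μ, Summable (fun t => A t ω))
    (hBsum : ∀ᵐ ω ∂μ, Summable (fun t => B t ω))
    (hαdiv : ∀ᵐ ω ∂μ, Tendsto (fun n => ∑ t ∈ Finset.range n, α t ω) atTop atTop)
    (hαlb : ∃ T : ℕ, 1 ≤ T ∧ ∀ᵐ ω ∂μ, ∀ t ≥ T, ε / (t : ℝ) ≤ α t ω)
    (hBsum' : ∀ᵐ ω ∂μ, Summable (fun t : ℕ => ((t : ℝ) + 1) ^ ε * B t ω))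
    (hαdiv' : ∀ᵐ ω ∂μ,
      Tendsto (fun n => ∑ t ∈ Finset.Ico 1 n, (α t ω - ε / (t : ℝ))) atTop atTop) :
    ∀ᵐ ω ∂μ, Tendsto (fun t : ℕ => (t : ℝ) ^ ε * Z t ω) atTop (nhds 0) :=
  almost_supermartingale_rate_general μ ℱ A B Z α ε hε hA hB hZ hα hA0 hB0 hZ0 hα0 hZint hrec hAsum
    hαlb hBsum' hαdiv'
end

section
/- Tail integration to moments: Suppose a non-negative random variable X satisfies P(X ≥ ε) ≤ exp(−(ε/a)^{1/C} + b) for all ε ≥ a·b^C, where a > 0, b > 0, and C is a positive integer. Then for any p ≥ 1, E[X^p] ≤ (a·b^C)^p + C·p·a^p·e^b·Γ(C·p). -/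
open MeasureTheory Real Set
open scoped ENNReal

/-! Layer cake: `E[X^p] = p ∫₀^∞ t^(p-1) P(X ≥ t) dt`. On `(0, M]` with `M = a b^C` bound the
probability by `1`, which contributes `M^p`; beyond `M` use the tail bound and enlarge the range
to `(0, ∞)`, where the substitution `u = (t/a)^(1/C)` turns the integral into `C a^p Γ(C p)`. -/

theorem lintegral_Ioc_rpow_sub_one {p M : ℝ} (hp : 0 < p) (hM : 0 ≤ M) :
    ∫⁻ t in Ioc 0 M, ENNReal.ofReal (t ^ (p - 1)) = ENNReal.ofReal (M ^ p / p) := by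
  have hint : IntegrableOn (fun t : ℝ => t ^ (p - 1)) (Ioc 0 M) :=
    (intervalIntegrable_iff_integrableOn_Ioc_of_le hM).mp
      (intervalIntegral.intervalIntegrable_rpow' (by linarith))
  rw [← ofReal_integral_eq_lintegral_ofReal hint, ← intervalIntegral.integral_of_le hM,
    integral_rpow (Or.inl (by linarith)), sub_add_cancel, zero_rpow hp.ne', sub_zero]
  filter_upwards [ae_restrict_mem measurableSet_Ioc] with t ht
  exact rpow_nonneg ht.1.le _

theorem lintegral_rpow_le_add_of_meas_le {Ω : Type*} [MeasurableSpace Ω] {μ : Measure Ω}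
    [IsZeroOrProbabilityMeasure μ] {X : Ω → ℝ} (hX0 : 0 ≤ᵐ[μ] X) (hX : AEMeasurable X μ)
    {p M : ℝ} (hp : 0 < p) (hM : 0 ≤ M) {g : ℝ → ℝ≥0∞}
    (htail : ∀ t, M < t → μ {ω | t ≤ X ω} ≤ g t) :
    ∫⁻ ω, ENNReal.ofReal (X ω ^ p) ∂μ ≤
      ENNReal.ofReal (M ^ p) +
        ENNReal.ofReal p * ∫⁻ t in Ioi M, g t * ENNReal.ofReal (t ^ (p - 1)) := by
  have hbody : ∫⁻ t in Ioc 0 M, μ {ω | t ≤ X ω} * ENNReal.ofReal (t ^ (p - 1)) ≤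
      ENNReal.ofReal (M ^ p / p) := by
    rw [← lintegral_Ioc_rpow_sub_one hp hM]
    exact lintegral_mono fun t => mul_le_of_le_one_left' prob_le_one
  have hbound : ∫⁻ t in Ioi M, μ {ω | t ≤ X ω} * ENNReal.ofReal (t ^ (p - 1)) ≤
      ∫⁻ t in Ioi M, g t * ENNReal.ofReal (t ^ (p - 1)) :=
    setLIntegral_mono' measurableSet_Ioi fun t ht => mul_le_mul_left (htail t ht) _
  rw [lintegral_rpow_eq_lintegral_meas_le_mul μ hX0 hX hp, ← Ioc_union_Ioi_eq_Ioi hM,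
    lintegral_union measurableSet_Ioi Ioc_disjoint_Ioi_same, mul_add]
  refine add_le_add ?_ (mul_le_mul_right hbound _)
  calc ENNReal.ofReal p * ∫⁻ t in Ioc 0 M, μ {ω | t ≤ X ω} * ENNReal.ofReal (t ^ (p - 1))
      ≤ ENNReal.ofReal p * ENNReal.ofReal (M ^ p / p) := mul_le_mul_right hbody _
    _ = ENNReal.ofReal (M ^ p) := by rw [← ENNReal.ofReal_mul hp.le, mul_div_cancel₀ _ hp.ne']

theorem integral_rpow_sub_one_mul_exp_neg_div_rpow {a p r : ℝ} (ha : 0 < a) (hp : 0 < p)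
    (hr : 0 < r) :
    ∫ t in Ioi 0, t ^ (p - 1) * exp (-(t / a) ^ r) = a ^ p / r * Gamma (p / r) := by
  have hscale : ∀ t ∈ Ioi (0 : ℝ), t ^ (p - 1) * exp (-(t / a) ^ r) =
      t ^ (p - 1) * exp (-a ^ (-r) * t ^ r) := fun t ht => by
    rw [div_rpow (le_of_lt ht) ha.le, div_eq_inv_mul, ← rpow_neg ha.le, neg_mul]
  rw [setIntegral_congr_fun measurableSet_Ioi hscale,
    integral_rpow_mul_exp_neg_mul_rpow hr (by linarith) (rpow_pos_of_pos ha _), sub_add_cancel,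
    ← rpow_mul ha.le, neg_div, neg_mul_neg, mul_div_cancel₀ _ hr.ne']
  ring

theorem lintegral_rpow_sub_one_mul_exp_neg_div_rpow {a p r : ℝ} (ha : 0 < a) (hp : 0 < p)
    (hr : 0 < r) :
    ∫⁻ t in Ioi 0, ENNReal.ofReal (t ^ (p - 1) * exp (-(t / a) ^ r)) =
      ENNReal.ofReal (a ^ p / r * Gamma (p / r)) := by
  have hval := integral_rpow_sub_one_mul_exp_neg_div_rpow ha hp hr
  have hpos : 0 < a ^ p / r * Gamma (p / r) := by positivity
  -- integrable since its integral is nonzero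
  rw [← hval, ofReal_integral_eq_lintegral_ofReal (Integrable.of_integral_ne_zero
    (hval ▸ hpos.ne'))]
  filter_upwards [ae_restrict_mem measurableSet_Ioi] with t ht
  exact mul_nonneg (rpow_nonneg (le_of_lt ht) _) (exp_nonneg _)

theorem tail_to_moments {Ω : Type*} [MeasurableSpace Ω] (μ : Measure Ω)
    [IsProbabilityMeasure μ] (X : Ω → ℝ) (hXmeas : Measurable X)
    (hX0 : ∀ ω, 0 ≤ X ω)
    (a b : ℝ) (C : ℕ) (ha : 0 < a) (hb : 0 < b) (hC : 0 < C)
    (htail : ∀ ε : ℝ, a * b ^ C ≤ ε →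
      (μ {ω | ε ≤ X ω}).toReal ≤ Real.exp (-(ε / a) ^ (1 / (C : ℝ)) + b)) :
    ∀ p : ℝ, 1 ≤ p →
      ∫⁻ ω, ENNReal.ofReal ((X ω) ^ p) ∂μ ≤
        ENNReal.ofReal ((a * b ^ C) ^ p +
          (C : ℝ) * p * a ^ p * Real.exp b * Real.Gamma ((C : ℝ) * p)) := by
  intro p hp
  have hp0 : 0 < p := by linarith
  have hCinv : 0 < 1 / (C : ℝ) := by positivity
  have hM : 0 ≤ a * b ^ C := by positivity
  have hmeas_le : ∀ t, a * b ^ C < t →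
      μ {ω | t ≤ X ω} ≤ ENNReal.ofReal (exp (-(t / a) ^ (1 / (C : ℝ)) + b)) := by
    intro t ht
    rw [← ENNReal.ofReal_toReal (measure_ne_top μ _)]
    exact ENNReal.ofReal_le_ofReal (htail t ht.le)
  calc ∫⁻ ω, ENNReal.ofReal (X ω ^ p) ∂μ
      ≤ ENNReal.ofReal ((a * b ^ C) ^ p) + ENNReal.ofReal p * ∫⁻ t in Ioi (a * b ^ C),
          ENNReal.ofReal (exp (-(t / a) ^ (1 / (C : ℝ)) + b)) * ENNReal.ofReal (t ^ (p - 1)) :=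
        lintegral_rpow_le_add_of_meas_le (.of_forall hX0) hXmeas.aemeasurable hp0 hM hmeas_le
    _ ≤ ENNReal.ofReal ((a * b ^ C) ^ p) + ENNReal.ofReal p * ∫⁻ t in Ioi 0,
          ENNReal.ofReal (exp b) *
            ENNReal.ofReal (t ^ (p - 1) * exp (-(t / a) ^ (1 / (C : ℝ)))) := by
        gcongr _ + _ * ?_
        refine (lintegral_mono_set (Ioi_subset_Ioi hM)).trans_eq (lintegral_congr fun t => ?_)
        rw [← ENNReal.ofReal_mul (exp_nonneg _), ← ENNReal.ofReal_mul (exp_nonneg _), exp_add]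
        ring_nf
    _ = ENNReal.ofReal ((a * b ^ C) ^ p) + ENNReal.ofReal p * (ENNReal.ofReal (exp b) *
          ENNReal.ofReal (a ^ p / (1 / C) * Gamma (p / (1 / C)))) := by
        rw [lintegral_const_mul' _ _ ENNReal.ofReal_ne_top,
          lintegral_rpow_sub_one_mul_exp_neg_div_rpow ha hp0 hCinv]
    _ = _ := by
        rw [← ENNReal.ofReal_mul (exp_nonneg _), ← ENNReal.ofReal_mul hp0.le,
          ← ENNReal.ofReal_add (by positivity)]
        · congr 1
          field_simp
        · positivity
end
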